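/- For every short game G, the misère outcome of G + G° is P (the second player to move wins G + G° under misère play), where G° is the adjoint of G. -/

import Mathlib

namespace SetTheory

universe u

/-- Pre-games, as in the older Mathlib (`SetTheory.PGame`, since removed). -/
inductive PGame : Type (u + 1)
  | mk : ∀ α β : Type u, (α → PGame) → (β → PGame) → PGame

namespace PGame

def LeftMoves : PGame → Type u
  | mk l _ _ _ => l

def RightMoves : PGame → Type u
  | mk _ r _ _ => r

def moveLeft : ∀ g : PGame, LeftMoves g → PGame
  | mk _l _ L _ => L

def moveRight : ∀ g : PGame, RightMoves g → PGame
  | mk _ _r _ R => R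

inductive IsOption : PGame → PGame → Prop
  | moveLeft {x : PGame} (i : x.LeftMoves) : IsOption (x.moveLeft i) x
  | moveRight {x : PGame} (i : x.RightMoves) : IsOption (x.moveRight i) x

instance : Zero PGame :=
  ⟨⟨PEmpty, PEmpty, PEmpty.elim, PEmpty.elim⟩⟩

def star : PGame.{u} :=
  ⟨PUnit, PUnit, fun _ => 0, fun _ => 0⟩

def neg : PGame → PGame
  | ⟨l, r, L, R⟩ => ⟨r, l, fun i => neg (R i), fun i => neg (L i)⟩

instance : Neg PGame :=
  ⟨neg⟩

noncomputable instance : Add PGame.{u} :=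
  ⟨fun x y => by
    induction x generalizing y with | mk xl xr _ _ IHxl IHxr => _
    induction y with | mk yl yr yL yR IHyl IHyr => _
    have y := mk yl yr yL yR
    refine ⟨xl ⊕ yl, xr ⊕ yr, Sum.rec ?_ ?_, Sum.rec ?_ ?_⟩
    · exact fun i => IHxl i y
    · exact IHyl
    · exact fun i => IHxr i y
    · exact IHyr⟩

def Identical : PGame.{u} → PGame.{u} → Prop
  | mk _ _ xL xR, mk _ _ yL yR =>
    Relator.BiTotal (fun i j => Identical (xL i) (yL j)) ∧
      Relator.BiTotal (fun i j => Identical (xR i) (yR j))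

noncomputable def birthday : PGame.{u} → Ordinal.{u}
  | ⟨_, _, xL, xR⟩ =>
    max (Ordinal.lsub.{u, u} fun i => birthday (xL i))
      (Ordinal.lsub.{u, u} fun i => birthday (xR i))

theorem birthday_moveLeft_lt {x : PGame} (i : x.LeftMoves) :
    (x.moveLeft i).birthday < x.birthday := by
  cases x; rw [birthday]; exact lt_max_of_lt_left (Ordinal.lt_lsub _ i)

theorem birthday_moveRight_lt {x : PGame} (i : x.RightMoves) :
    (x.moveRight i).birthday < x.birthday := by
  cases x; rw [birthday]; exact lt_max_of_lt_right (Ordinal.lt_lsub _ i)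

end PGame

end SetTheory

open SetTheory PGame

namespace MisereDicot

def Follower (G' G : PGame) : Prop := Relation.ReflTransGen PGame.IsOption G' G

def IsShort (G : PGame) : Prop :=
  ∀ G', Follower G' G → Finite G'.LeftMoves ∧ Finite G'.RightMoves

def Dicot (G : PGame) : Prop :=
  ∀ G', Follower G' G → (IsEmpty G'.LeftMoves ↔ IsEmpty G'.RightMoves)

mutual
def LeftWinsFirst (G : PGame) : Prop :=
  IsEmpty G.LeftMoves ∨ ∃ i, ¬ RightWinsFirst (G.moveLeft i)
termination_by G.birthday
decreasing_by exact PGame.birthday_moveLeft_lt i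

def RightWinsFirst (G : PGame) : Prop :=
  IsEmpty G.RightMoves ∨ ∃ j, ¬ LeftWinsFirst (G.moveRight j)
termination_by G.birthday
decreasing_by exact PGame.birthday_moveRight_lt j
end

inductive MOutcome : Type
  | L | N | P | R
deriving DecidableEq

instance : LE MOutcome := ⟨fun a b => a = b ∨ a = .R ∨ b = .L⟩

noncomputable def outcome (G : PGame) : MOutcome := by
  classical
  exact if LeftWinsFirst G then (if RightWinsFirst G then .N else .L)
        else (if RightWinsFirst G then .R else .P)

def Dge (G H : PGame) : Prop :=
  ∀ X : PGame, IsShort X → Dicot X → outcome (H + X) ≤ outcome (G + X)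

def Deq (G H : PGame) : Prop :=
  ∀ X : PGame, IsShort X → Dicot X → outcome (G + X) = outcome (H + X)

def Dgt (G H : PGame) : Prop := Dge G H ∧ ¬ Deq G H

def DInvertible (G : PGame) : Prop :=
  ∃ H : PGame, IsShort H ∧ Dicot H ∧ Deq (G + H) 0

/-- The left option `G^L_i` is reversible through its right option `(G^L_i)^R_j ≼ G`. -/
def LeftReversibleAt (G : PGame) (i : G.LeftMoves) (j : (G.moveLeft i).RightMoves) : Prop :=
  Dge G ((G.moveLeft i).moveRight j)

def RightReversibleAt (G : PGame) (j : G.RightMoves) (i : (G.moveRight j).LeftMoves) : Prop :=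
  Dge ((G.moveRight j).moveLeft i) G

/-- `G` has a dominated left option (removable by the Domination theorem). -/
def LeftDominated (G : PGame) : Prop :=
  ∃ i i' : G.LeftMoves, ¬ (G.moveLeft i).Identical (G.moveLeft i') ∧
    Dge (G.moveLeft i') (G.moveLeft i)

def RightDominated (G : PGame) : Prop :=
  ∃ j j' : G.RightMoves, ¬ (G.moveRight j).Identical (G.moveRight j') ∧
    Dge (G.moveRight j) (G.moveRight j')

/-- `G` has a non-atomic reversible left option (bypassable). -/
def LeftNonAtomicReversible (G : PGame) : Prop :=
  ∃ i j, LeftReversibleAt G i j ∧ Nonempty ((G.moveLeft i).moveRight j).LeftMoves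

def RightNonAtomicReversible (G : PGame) : Prop :=
  ∃ j i, RightReversibleAt G j i ∧ Nonempty ((G.moveRight j).moveLeft i).RightMoves

/-- `G` has an atomic-reversible left option to which the atomic-reversibility
replacement applies nontrivially (i.e. changing the set of options): either some
other left option is a winning first move for Left (so the option is removable),
or the option is not already `*`. -/
def LeftAtomicReducible (G : PGame) : Prop :=
  ∃ i j, LeftReversibleAt G i j ∧ IsEmpty ((G.moveLeft i).moveRight j).LeftMoves ∧
    ((∃ i', ¬ (G.moveLeft i').Identical (G.moveLeft i) ∧ ¬ RightWinsFirst (G.moveLeft i')) ∨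
      ¬ (G.moveLeft i).Identical star)

def RightAtomicReducible (G : PGame) : Prop :=
  ∃ j i, RightReversibleAt G j i ∧ IsEmpty ((G.moveRight j).moveLeft i).RightMoves ∧
    ((∃ j', ¬ (G.moveRight j').Identical (G.moveRight j) ∧ ¬ LeftWinsFirst (G.moveRight j')) ∨
      ¬ (G.moveRight j).Identical star)

/-- The Substitution theorem applies to `G`: `G = {A | C}` with `A` an
atomic-reversible left option and `C` an atomic-reversible right option. -/
def SubstitutionReducible (G : PGame) : Prop :=
  (∀ i i' : G.LeftMoves, (G.moveLeft i).Identical (G.moveLeft i')) ∧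
  (∀ j j' : G.RightMoves, (G.moveRight j).Identical (G.moveRight j')) ∧
  (∃ i j, LeftReversibleAt G i j ∧ IsEmpty ((G.moveLeft i).moveRight j).LeftMoves) ∧
  (∃ j i, RightReversibleAt G j i ∧ IsEmpty ((G.moveRight j).moveLeft i).RightMoves)

/-- `G` is in canonical form: no follower admits any of the misère-dicot
simplifications (domination, non-atomic reversibility, atomic reversibility,
substitution) producing an equivalent game with a different set of options. -/
def CanonicalForm (G : PGame) : Prop :=
  ∀ G', Follower G' G →
    ¬ (LeftDominated G' ∨ RightDominated G' ∨
       LeftNonAtomicReversible G' ∨ RightNonAtomicReversible G' ∨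
       LeftAtomicReducible G' ∨ RightAtomicReducible G' ∨
       SubstitutionReducible G')

/-- The game `*2 = {0, * | 0, *}`. -/
def star2 : PGame :=
  PGame.mk Bool Bool (fun b => cond b star 0) (fun b => cond b star 0)

open Classical in
/-- The adjoint `G°` of `G`. -/
noncomputable def adjoint : PGame → PGame
  | PGame.mk l r L R =>
    if IsEmpty l ∧ IsEmpty r then star
    else if IsEmpty l then PGame.mk r PUnit (fun j => adjoint (R j)) (fun _ => 0)
    else if IsEmpty r then PGame.mk PUnit l (fun _ => 0) (fun i => adjoint (L i))
    else PGame.mk r l (fun j => adjoint (R j)) (fun i => adjoint (L i))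

/-- A universe of short games: a class closed under taking options, disjunctive
sums and conjugates. -/
structure GameUniverse where
  mem : PGame → Prop
  short_mem : ∀ G, mem G → IsShort G
  isOption_mem : ∀ G G', mem G → PGame.IsOption G' G → mem G'
  add_mem : ∀ G H, mem G → mem H → mem (G + H)
  neg_mem : ∀ G, mem G → mem (-G)

/-- `G ≽ H` modulo the universe `U`. -/
def UGe (U : GameUniverse) (G H : PGame) : Prop :=
  ∀ X : PGame, U.mem X → outcome (H + X) ≤ outcome (G + X)

/-- `G = H` modulo the universe `U`. -/
def UEq (U : GameUniverse) (G H : PGame) : Prop :=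
  ∀ X : PGame, U.mem X → outcome (G + X) = outcome (H + X)

/-- `G ≻ H` modulo the universe `U`. -/
def UGt (U : GameUniverse) (G H : PGame) : Prop := UGe U G H ∧ ¬ UEq U G H

/-- `J` is invertible in the universe `U`. -/
def UInvertible (U : GameUniverse) (J : PGame) : Prop :=
  ∃ J' : PGame, U.mem J' ∧ UEq U (J + J') 0

end MisereDicot

/-! The second player wins `G + G°` by mirroring: a move to `G^L` (or `G^R`) in one component is
answered by the move to `(G^L)°` (or `(G^R)°`) in the other, giving a position of the same shape
with a smaller `G`. The adjoint always has options for both players, so the player to move is never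
stuck in `G + G°`. The only moves of `G°` that cannot be mirrored are the moves to `0`, and `0` is a
left option of `G°` only when `G` has no right option (dually for Right): after such a move the
opponent has no move in `G + 0` and, playing misère, wins. -/

namespace SetTheory.PGame

theorem isEmpty_leftMoves_zero : IsEmpty (0 : PGame).LeftMoves := inferInstanceAs (IsEmpty PEmpty)

theorem isEmpty_rightMoves_zero : IsEmpty (0 : PGame).RightMoves := inferInstanceAs (IsEmpty PEmpty)

variable {x y : PGame}

theorem isEmpty_leftMoves_add :
    IsEmpty (x + y).LeftMoves ↔ IsEmpty x.LeftMoves ∧ IsEmpty y.LeftMoves := by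
  cases x; cases y; exact isEmpty_sum

theorem isEmpty_rightMoves_add :
    IsEmpty (x + y).RightMoves ↔ IsEmpty x.RightMoves ∧ IsEmpty y.RightMoves := by
  cases x; cases y; exact isEmpty_sum

theorem moveLeft_add_cases (k : (x + y).LeftMoves) :
    (∃ i, (x + y).moveLeft k = x.moveLeft i + y) ∨ ∃ i, (x + y).moveLeft k = x + y.moveLeft i := by
  cases x; cases y
  rcases k with i | i
  exacts [.inl ⟨i, rfl⟩, .inr ⟨i, rfl⟩]

theorem moveRight_add_cases (k : (x + y).RightMoves) :
    (∃ j, (x + y).moveRight k = x.moveRight j + y) ∨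
      ∃ j, (x + y).moveRight k = x + y.moveRight j := by
  cases x; cases y
  rcases k with j | j
  exacts [.inl ⟨j, rfl⟩, .inr ⟨j, rfl⟩]

theorem exists_moveLeft_add_eq_left (i : x.LeftMoves) :
    ∃ k, (x + y).moveLeft k = x.moveLeft i + y := by
  cases x; cases y; exact ⟨.inl i, rfl⟩

theorem exists_moveLeft_add_eq_right (i : y.LeftMoves) :
    ∃ k, (x + y).moveLeft k = x + y.moveLeft i := by
  cases x; cases y; exact ⟨.inr i, rfl⟩

theorem exists_moveRight_add_eq_left (j : x.RightMoves) :
    ∃ k, (x + y).moveRight k = x.moveRight j + y := by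
  cases x; cases y; exact ⟨.inl j, rfl⟩

theorem exists_moveRight_add_eq_right (j : y.RightMoves) :
    ∃ k, (x + y).moveRight k = x + y.moveRight j := by
  cases x; cases y; exact ⟨.inr j, rfl⟩

end SetTheory.PGame

namespace MisereDicot

theorem leftWinsFirst_of_isEmpty {G : PGame} (h : IsEmpty G.LeftMoves) : LeftWinsFirst G := by
  rw [LeftWinsFirst]; exact .inl h

theorem rightWinsFirst_of_isEmpty {G : PGame} (h : IsEmpty G.RightMoves) : RightWinsFirst G := by
  rw [RightWinsFirst]; exact .inl h

theorem leftWinsFirst_of_moveLeft_eq {G H : PGame} (i : G.LeftMoves) (hi : G.moveLeft i = H)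
    (hH : ¬ RightWinsFirst H) : LeftWinsFirst G := by
  rw [LeftWinsFirst]; exact .inr ⟨i, hi ▸ hH⟩

theorem rightWinsFirst_of_moveRight_eq {G H : PGame} (j : G.RightMoves) (hj : G.moveRight j = H)
    (hH : ¬ LeftWinsFirst H) : RightWinsFirst G := by
  rw [RightWinsFirst]; exact .inr ⟨j, hj ▸ hH⟩

theorem not_leftWinsFirst_iff {G : PGame} :
    ¬ LeftWinsFirst G ↔ Nonempty G.LeftMoves ∧ ∀ i, RightWinsFirst (G.moveLeft i) := by
  rw [LeftWinsFirst]; simp [not_isEmpty_iff]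

theorem not_rightWinsFirst_iff {G : PGame} :
    ¬ RightWinsFirst G ↔ Nonempty G.RightMoves ∧ ∀ j, LeftWinsFirst (G.moveRight j) := by
  rw [RightWinsFirst]; simp [not_isEmpty_iff]

theorem outcome_eq_P_iff {G : PGame} :
    outcome G = .P ↔ ¬ LeftWinsFirst G ∧ ¬ RightWinsFirst G := by
  rw [outcome]; split_ifs <;> simp_all

section
universe u
variable {l r : Type u} {L : l → PGame.{u}} {R : r → PGame.{u}}

theorem adjoint_mk_of_isEmpty_of_isEmpty (hl : IsEmpty l) (hr : IsEmpty r) :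
    adjoint (.mk l r L R) = PGame.star := by
  rw [adjoint, if_pos ⟨hl, hr⟩]

theorem adjoint_mk_of_isEmpty_of_nonempty (hl : IsEmpty l) (hr : Nonempty r) :
    adjoint (.mk l r L R) = .mk r PUnit (fun j => adjoint (R j)) (fun _ => 0) := by
  rw [adjoint, if_neg (fun h => not_isEmpty_of_nonempty r h.2), if_pos hl]

theorem adjoint_mk_of_nonempty_of_isEmpty (hl : Nonempty l) (hr : IsEmpty r) :
    adjoint (.mk l r L R) = .mk PUnit l (fun _ => 0) (fun i => adjoint (L i)) := by
  rw [adjoint, if_neg (fun h => not_isEmpty_of_nonempty l h.1),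
    if_neg (not_isEmpty_of_nonempty l), if_pos hr]

theorem adjoint_mk_of_nonempty_of_nonempty (hl : Nonempty l) (hr : Nonempty r) :
    adjoint (.mk l r L R) = .mk r l (fun j => adjoint (R j)) (fun i => adjoint (L i)) := by
  rw [adjoint, if_neg (fun h => not_isEmpty_of_nonempty l h.1),
    if_neg (not_isEmpty_of_nonempty l), if_neg (not_isEmpty_of_nonempty r)]

end

theorem exists_adjoint_moveLeft_eq_iff {G H : PGame} :
    (∃ i, (adjoint G).moveLeft i = H) ↔
      (∃ j, adjoint (G.moveRight j) = H) ∨ (IsEmpty G.RightMoves ∧ H = 0) := by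
  obtain ⟨l, r, L, R⟩ := G
  rcases isEmpty_or_nonempty l with hl | hl <;> rcases isEmpty_or_nonempty r with hr | hr
  · rw [adjoint_mk_of_isEmpty_of_isEmpty hl hr]
    simp [hr, PGame.star, moveLeft, LeftMoves, RightMoves, eq_comm]
  · rw [adjoint_mk_of_isEmpty_of_nonempty hl hr]
    simp [moveLeft, moveRight, LeftMoves, RightMoves]
  · rw [adjoint_mk_of_nonempty_of_isEmpty hl hr]
    simp [hr, moveLeft, LeftMoves, RightMoves, eq_comm]
  · rw [adjoint_mk_of_nonempty_of_nonempty hl hr]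
    simp [moveLeft, moveRight, LeftMoves, RightMoves]

theorem exists_adjoint_moveRight_eq_iff {G H : PGame} :
    (∃ j, (adjoint G).moveRight j = H) ↔
      (∃ i, adjoint (G.moveLeft i) = H) ∨ (IsEmpty G.LeftMoves ∧ H = 0) := by
  obtain ⟨l, r, L, R⟩ := G
  rcases isEmpty_or_nonempty l with hl | hl <;> rcases isEmpty_or_nonempty r with hr | hr
  · rw [adjoint_mk_of_isEmpty_of_isEmpty hl hr]
    simp [hl, PGame.star, moveRight, LeftMoves, RightMoves, eq_comm]
  · rw [adjoint_mk_of_isEmpty_of_nonempty hl hr]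
    simp [hl, moveRight, LeftMoves, RightMoves, eq_comm]
  · rw [adjoint_mk_of_nonempty_of_isEmpty hl hr]
    simp [moveLeft, moveRight, LeftMoves, RightMoves]
  · rw [adjoint_mk_of_nonempty_of_nonempty hl hr]
    simp [moveLeft, moveRight, LeftMoves, RightMoves]

theorem nonempty_leftMoves_adjoint (G : PGame) : Nonempty (adjoint G).LeftMoves := by
  rcases isEmpty_or_nonempty G.RightMoves with hr | ⟨⟨j⟩⟩
  · exact (exists_adjoint_moveLeft_eq_iff.2 (.inr ⟨hr, rfl⟩)).nonempty
  · exact (exists_adjoint_moveLeft_eq_iff.2 (.inl ⟨j, rfl⟩)).nonempty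

theorem nonempty_rightMoves_adjoint (G : PGame) : Nonempty (adjoint G).RightMoves := by
  rcases isEmpty_or_nonempty G.LeftMoves with hl | ⟨⟨i⟩⟩
  · exact (exists_adjoint_moveRight_eq_iff.2 (.inr ⟨hl, rfl⟩)).nonempty
  · exact (exists_adjoint_moveRight_eq_iff.2 (.inl ⟨i, rfl⟩)).nonempty

theorem not_leftWinsFirst_add_adjoint (G : PGame) : ¬ LeftWinsFirst (G + adjoint G) := by
  induction G with | mk l r L R ihL ihR
  rw [not_leftWinsFirst_iff]
  refine ⟨?_, fun k => ?_⟩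
  · obtain ⟨i⟩ := nonempty_leftMoves_adjoint (.mk l r L R)
    exact (PGame.exists_moveLeft_add_eq_right i).nonempty
  rcases PGame.moveLeft_add_cases k with ⟨i, hk⟩ | ⟨i, hk⟩ <;> rw [hk]
  · obtain ⟨j, hj⟩ := exists_adjoint_moveRight_eq_iff.2 (.inl ⟨i, rfl⟩)
    obtain ⟨k', hk'⟩ := PGame.exists_moveRight_add_eq_right (x := L i) j
    exact rightWinsFirst_of_moveRight_eq k' (hk'.trans (by rw [hj]; rfl)) (ihL i)
  · rcases exists_adjoint_moveLeft_eq_iff.1 ⟨i, rfl⟩ with ⟨j, hj⟩ | ⟨hr, h0⟩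
    · obtain ⟨k', hk'⟩ := PGame.exists_moveRight_add_eq_left (y := adjoint (R j)) j
      exact hj ▸ rightWinsFirst_of_moveRight_eq k' hk' (ihR j)
    · rw [h0]
      exact rightWinsFirst_of_isEmpty
        (PGame.isEmpty_rightMoves_add.2 ⟨hr, PGame.isEmpty_rightMoves_zero⟩)

theorem not_rightWinsFirst_add_adjoint (G : PGame) : ¬ RightWinsFirst (G + adjoint G) := by
  induction G with | mk l r L R ihL ihR
  rw [not_rightWinsFirst_iff]
  refine ⟨?_, fun k => ?_⟩
  · obtain ⟨j⟩ := nonempty_rightMoves_adjoint (.mk l r L R)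
    exact (PGame.exists_moveRight_add_eq_right j).nonempty
  rcases PGame.moveRight_add_cases k with ⟨j, hk⟩ | ⟨j, hk⟩ <;> rw [hk]
  · obtain ⟨i, hi⟩ := exists_adjoint_moveLeft_eq_iff.2 (.inl ⟨j, rfl⟩)
    obtain ⟨k', hk'⟩ := PGame.exists_moveLeft_add_eq_right (x := R j) i
    exact leftWinsFirst_of_moveLeft_eq k' (hk'.trans (by rw [hi]; rfl)) (ihR j)
  · rcases exists_adjoint_moveRight_eq_iff.1 ⟨j, rfl⟩ with ⟨i, hi⟩ | ⟨hl, h0⟩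
    · obtain ⟨k', hk'⟩ := PGame.exists_moveLeft_add_eq_left (y := adjoint (L i)) i
      exact hi ▸ leftWinsFirst_of_moveLeft_eq k' hk' (ihL i)
    · rw [h0]
      exact leftWinsFirst_of_isEmpty
        (PGame.isEmpty_leftMoves_add.2 ⟨hl, PGame.isEmpty_leftMoves_zero⟩)

/-- for every short game `G`, the misère outcome of `G + G°` is `P`,
where `G°` is the adjoint of `G`. -/
theorem stmt14 (G : PGame) (hs : IsShort G) :
    outcome (G + adjoint G) = MOutcome.P :=
  outcome_eq_P_iff.2 ⟨not_leftWinsFirst_add_adjoint G, not_rightWinsFirst_add_adjoint G⟩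

end MisereDicot
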